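/- arXiv:2404.19243 — 2 statements merged into one kernel-verified Lean document; each statement's English description precedes it below -/
import Mathlib

section
/- Case 2 of pattern fusion is well-defined and correct: let o and f be permutations of {1,...,m} with suffixorder(o) = prefixorder(f) and o_1 ≠ f_m. Then there is a unique permutation u of {1,...,m+1} with prefixorder(u) = o and suffixorder(u) = f; explicitly, if o_1 < f_m then u_1 = o_1 and u_{i+1} = f_i if f_i < o_1, u_{i+1} = f_i + 1 otherwise, and if o_1 > f_m then u_1 = o_1 + 1 and u_{i+1} = f_i if f_i ≤ o_1, u_{i+1} = f_i + 1 otherwise. -/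
/-- Rank of entry `j` among the entries of `q` (1-indexed rank). -/
def rankMap {α : Type*} [LinearOrder α] {m : ℕ} (q : Fin m → α) : Fin m → ℕ :=
  fun j => (Finset.univ.filter fun i => q i ≤ q j).card

/-- `x` is an order-preserving pattern (a permutation of `{1,...,m}` written as a sequence). -/
def IsOPP {m : ℕ} (x : Fin m → ℕ) : Prop :=
  Function.Injective x ∧ ∀ j, 1 ≤ x j ∧ x j ≤ m

/-- The length-`ℓ` window of the (1-indexed) time series `k` ending at index `c`. -/
def window (k : ℕ → ℝ) (c ℓ : ℕ) : Fin ℓ → ℝ :=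
  fun j => k (c - ℓ + 1 + (j : ℕ))

/-- `c` is an occurrence (end index) of pattern `p` in the time series `k` of length `n`. -/
def isOcc (k : ℕ → ℝ) (n : ℕ) {ℓ : ℕ} (p : Fin ℓ → ℕ) (c : ℕ) : Prop :=
  ℓ ≤ c ∧ c ≤ n ∧ rankMap (window k c ℓ) = p

/-- Relative order of the first `m` entries of `x`. -/
def prefixorder {α : Type*} [LinearOrder α] {m : ℕ} (x : Fin (m+1) → α) : Fin m → ℕ :=
  rankMap (fun j : Fin m => x j.castSucc)

/-- Relative order of the last `m` entries of `x`. -/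
def suffixorder {α : Type*} [LinearOrder α] {m : ℕ} (x : Fin (m+1) → α) : Fin m → ℕ :=
  rankMap (fun j : Fin m => x j.succ)

open Classical in
/-- The set of occurrences of `p` in `k`. -/
noncomputable def occSet (k : ℕ → ℝ) (n : ℕ) {ℓ : ℕ} (p : Fin ℓ → ℕ) : Finset ℕ :=
  (Finset.Icc 1 n).filter fun c => isOcc k n p c

/-- The support of `p` in `k`. -/
noncomputable def supp (k : ℕ → ℝ) (n : ℕ) {ℓ : ℕ} (p : Fin ℓ → ℕ) : ℕ :=
  (occSet k n p).card

/-!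
A permutation `u` of `{1, …, n+1}` is recovered from its first entry `a` and its suffix order
`f`: the remaining entries are those of `f`, with every value `≥ a` raised by one. Hence a fusion
`u` of `o` and `f` is determined by `u₁`, and the rank identities
`u₁ = o₁ + [u_{m+2} < u₁]` and `u_{m+2} = f_{m+1} + [u₁ < u_{m+2}]` force
`u₁ = o₁ + [f_{m+1} < o₁]` once `o₁ ≠ f_{m+1}`. Conversely, for this `u` the prefix order `p` is a
permutation with `p₁ = o₁` whose suffix order is `prefixorder f = suffixorder o`, so `p = o` by
the same reconstruction.
-/

section RankMap

variable {α β : Type*} [LinearOrder α] [LinearOrder β] {m : ℕ}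

lemma rankMap_congr {q : Fin m → α} {q' : Fin m → β}
    (h : ∀ i j, q i ≤ q j ↔ q' i ≤ q' j) : rankMap q = rankMap q' := by
  funext j
  simp only [rankMap, h]

lemma rankMap_comp_strictMono (q : Fin m → α) {g : α → β} (hg : StrictMono g) :
    rankMap (g ∘ q) = rankMap q :=
  rankMap_congr fun _ _ => hg.le_iff_le

lemma rankMap_le_rankMap {q : Fin m → α} {i j : Fin m} (h : q i ≤ q j) :
    rankMap q i ≤ rankMap q j :=
  Finset.card_le_card fun _ hk => by
    simp only [Finset.mem_filter] at hk ⊢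
    exact ⟨hk.1, hk.2.trans h⟩

lemma rankMap_lt_rankMap {q : Fin m → α} {i j : Fin m} (h : q i < q j) :
    rankMap q i < rankMap q j := by
  refine Finset.card_lt_card ⟨fun _ hk => ?_, fun hsub => ?_⟩
  · simp only [Finset.mem_filter] at hk ⊢
    exact ⟨hk.1, hk.2.trans h.le⟩
  · have := (Finset.mem_filter.1 (hsub (Finset.mem_filter.2 ⟨Finset.mem_univ j, le_rfl⟩))).2
    exact (not_lt.2 this h).elim

lemma rankMap_le_rankMap_iff (q : Fin m → α) (i j : Fin m) :
    rankMap q i ≤ rankMap q j ↔ q i ≤ q j :=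
  ⟨fun h => not_lt.1 fun hlt => (rankMap_lt_rankMap hlt).not_ge h, rankMap_le_rankMap⟩

lemma rankMap_rankMap_comp {k : ℕ} (q : Fin m → α) (e : Fin k → Fin m) :
    rankMap (rankMap q ∘ e) = rankMap (q ∘ e) :=
  rankMap_congr fun i j => rankMap_le_rankMap_iff q (e i) (e j)

lemma isOPP_rankMap {q : Fin m → α} (hq : Function.Injective q) : IsOPP (rankMap q) := by
  refine ⟨fun i j hij => hq ?_, fun j => ⟨?_, ?_⟩⟩
  · exact le_antisymm ((rankMap_le_rankMap_iff q i j).1 hij.le)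
      ((rankMap_le_rankMap_iff q j i).1 hij.ge)
  · exact Finset.card_pos.2 ⟨j, Finset.mem_filter.2 ⟨Finset.mem_univ j, le_rfl⟩⟩
  · exact (Finset.card_filter_le _ _).trans (Finset.card_fin m).le

lemma rankMap_castSucc (q : Fin (m+1) → α) (j : Fin m) :
    rankMap q j.castSucc =
      prefixorder q j + if q (Fin.last m) ≤ q j.castSucc then 1 else 0 := by
  simp only [prefixorder, rankMap, Finset.card_filter, Fin.sum_univ_castSucc]

lemma rankMap_succ (q : Fin (m+1) → α) (j : Fin m) :
    rankMap q j.succ = suffixorder q j + if q 0 ≤ q j.succ then 1 else 0 := by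
  simp only [suffixorder, rankMap, Finset.card_filter, Fin.sum_univ_succ]
  exact add_comm _ _

lemma suffixorder_prefixorder (q : Fin (m+2) → α) :
    suffixorder (prefixorder q) = prefixorder (suffixorder q) := by
  calc suffixorder (prefixorder q)
      _ = rankMap (fun j : Fin m => q j.succ.castSucc) :=
        rankMap_rankMap_comp (fun j => q j.castSucc) Fin.succ
      _ = rankMap (fun j : Fin m => q j.castSucc.succ) := by simp only [Fin.succ_castSucc]
      _ = prefixorder (suffixorder q) :=
        (rankMap_rankMap_comp (fun j => q j.succ) Fin.castSucc).symm

end RankMap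

lemma IsOPP.rankMap_eq {m : ℕ} {x : Fin m → ℕ} (hx : IsOPP x) : rankMap x = x := by
  obtain ⟨hinj, hb⟩ := hx
  have himg : Finset.univ.image x = Finset.Icc 1 m := by
    refine Finset.eq_of_subset_of_card_le (fun v hv => ?_) ?_
    · obtain ⟨i, -, rfl⟩ := Finset.mem_image.1 hv
      exact Finset.mem_Icc.2 (hb i)
    · rw [Finset.card_image_of_injective _ hinj]
      simp
  funext j
  have hle : (Finset.Icc 1 m).filter (· ≤ x j) = Finset.Icc 1 (x j) := by
    ext v
    simp only [Finset.mem_filter, Finset.mem_Icc]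
    have := hb j
    omega
  have hcard : rankMap x j = ((Finset.univ.image x).filter (· ≤ x j)).card := by
    rw [Finset.filter_image, Finset.card_image_of_injective _ hinj]
    rfl
  rw [hcard, himg, hle, Nat.card_Icc, Nat.add_sub_cancel]

lemma IsOPP.prefixorder_add {m : ℕ} {u : Fin (m+1) → ℕ} (hu : IsOPP u) (j : Fin m) :
    prefixorder u j + (if u (Fin.last m) ≤ u j.castSucc then 1 else 0) = u j.castSucc := by
  rw [← rankMap_castSucc, hu.rankMap_eq]

lemma IsOPP.suffixorder_add {m : ℕ} {u : Fin (m+1) → ℕ} (hu : IsOPP u) (j : Fin m) :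
    suffixorder u j + (if u 0 ≤ u j.succ then 1 else 0) = u j.succ := by
  rw [← rankMap_succ, hu.rankMap_eq]

def shiftFrom (a x : ℕ) : ℕ := x + if a ≤ x then 1 else 0

lemma shiftFrom_strictMono (a : ℕ) : StrictMono (shiftFrom a) := by
  intro x y hxy
  simp only [shiftFrom]
  split_ifs <;> omega

lemma shiftFrom_ne (a x : ℕ) : shiftFrom a x ≠ a := by
  simp only [shiftFrom]
  split_ifs <;> omega

def consShift {n : ℕ} (a : ℕ) (f : Fin n → ℕ) : Fin (n+1) → ℕ :=
  Fin.cons a (shiftFrom a ∘ f)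

section ConsShift

variable {n : ℕ} {a : ℕ} {f : Fin n → ℕ}

@[simp] lemma consShift_zero : consShift a f 0 = a := rfl

@[simp] lemma consShift_succ (i : Fin n) : consShift a f i.succ = shiftFrom a (f i) := rfl

lemma isOPP_consShift (hf : IsOPP f) (ha₁ : 1 ≤ a) (ha : a ≤ n + 1) :
    IsOPP (consShift a f) := by
  refine ⟨fun i j hij => ?_, fun j => ?_⟩
  · cases i using Fin.cases <;> cases j using Fin.cases <;>
      simp only [consShift_zero, consShift_succ] at hij
    · rfl
    · exact absurd hij.symm (shiftFrom_ne _ _)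
    · exact absurd hij (shiftFrom_ne _ _)
    · exact congrArg _ (hf.1 ((shiftFrom_strictMono a).injective hij))
  · cases j using Fin.cases
    · exact ⟨ha₁, ha⟩
    · have := hf.2 ‹_›
      simp only [consShift_succ, shiftFrom]
      split_ifs <;> omega

lemma suffixorder_consShift (hf : IsOPP f) : suffixorder (consShift a f) = f :=
  (rankMap_comp_strictMono f (shiftFrom_strictMono a)).trans hf.rankMap_eq

end ConsShift

lemma IsOPP.eq_consShift {n : ℕ} {u : Fin (n+1) → ℕ} (hu : IsOPP u) :
    u = consShift (u 0) (suffixorder u) := by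
  funext j
  cases j using Fin.cases with
  | zero => rfl
  | succ i =>
    have hrank := hu.suffixorder_add i
    have hne : u i.succ ≠ u 0 := fun h => Fin.succ_ne_zero i (hu.1 h)
    simp only [consShift_succ, shiftFrom]
    split_ifs at hrank ⊢ <;> omega

lemma IsOPP.ext_of_zero_of_suffixorder {n : ℕ} {u v : Fin (n+1) → ℕ} (hu : IsOPP u)
    (hv : IsOPP v) (h0 : u 0 = v 0) (hs : suffixorder u = suffixorder v) : u = v := by
  rw [hu.eq_consShift, hv.eq_consShift, h0, hs]

def fusionHead {m : ℕ} (o f : Fin (m+1) → ℕ) : ℕ :=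
  o 0 + if f (Fin.last m) < o 0 then 1 else 0

section Fusion

variable {m : ℕ} {o f : Fin (m+1) → ℕ}

lemma IsOPP.zero_eq_fusionHead {u : Fin (m+2) → ℕ} (hu : IsOPP u) (hp : prefixorder u = o)
    (hs : suffixorder u = f) (hne : o 0 ≠ f (Fin.last m)) : u 0 = fusionHead o f := by
  have hfirst := hu.prefixorder_add 0
  have hlast := hu.suffixorder_add (Fin.last m)
  have hends : u 0 ≠ u (Fin.last (m+1)) := fun h => Fin.last_pos'.ne (hu.1 h)
  rw [hp, Fin.castSucc_zero] at hfirst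
  rw [hs, Fin.succ_last] at hlast
  simp only [Nat.succ_eq_add_one] at hlast
  simp only [fusionHead]
  split_ifs at hfirst hlast ⊢ <;> omega

lemma isOPP_consShift_fusionHead (ho : IsOPP o) (hf : IsOPP f) :
    IsOPP (consShift (fusionHead o f) f) := by
  have := ho.2 0
  exact isOPP_consShift hf (by simp only [fusionHead]; omega)
    (by simp only [fusionHead]; split_ifs <;> omega)

lemma prefixorder_consShift_fusionHead (ho : IsOPP o) (hf : IsOPP f)
    (hof : suffixorder o = prefixorder f) : prefixorder (consShift (fusionHead o f) f) = o := by
  have hu := isOPP_consShift_fusionHead ho hf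
  have hp : IsOPP (prefixorder (consShift (fusionHead o f) f)) :=
    isOPP_rankMap (hu.1.comp (Fin.castSucc_injective _))
  refine hp.ext_of_zero_of_suffixorder ho ?_ ?_
  · have hfirst := hu.prefixorder_add 0
    rw [Fin.castSucc_zero, consShift_zero, ← Fin.succ_last, consShift_succ, shiftFrom] at hfirst
    have ha : fusionHead o f = o 0 + if f (Fin.last m) < o 0 then 1 else 0 := rfl
    generalize fusionHead o f = a at ha hfirst ⊢
    split_ifs at ha hfirst <;> omega
  · rw [suffixorder_prefixorder, suffixorder_consShift hf, hof]

end Fusion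

theorem stmt11 {m : ℕ} (o f : Fin (m+1) → ℕ) (ho : IsOPP o) (hf : IsOPP f)
    (hof : suffixorder o = prefixorder f) (hne : o 0 ≠ f (Fin.last m)) :
    (∃! u : Fin (m+2) → ℕ, IsOPP u ∧ prefixorder u = o ∧ suffixorder u = f) ∧
    (∀ u : Fin (m+2) → ℕ, IsOPP u → prefixorder u = o → suffixorder u = f →
      ((o 0 < f (Fin.last m) →
          u 0 = o 0 ∧
            ∀ i : Fin (m+1), u i.succ = if f i < o 0 then f i else f i + 1) ∧
       (f (Fin.last m) < o 0 →
          u 0 = o 0 + 1 ∧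
            ∀ i : Fin (m+1), u i.succ = if f i ≤ o 0 then f i else f i + 1))) := by
  have hfusion : ∀ u, IsOPP u → prefixorder u = o → suffixorder u = f →
      u = consShift (fusionHead o f) f := fun u hu hp hs => by
    rw [hu.eq_consShift, hu.zero_eq_fusionHead hp hs hne, hs]
  refine ⟨⟨_, ⟨isOPP_consShift_fusionHead ho hf, prefixorder_consShift_fusionHead ho hf hof,
    suffixorder_consShift hf⟩, fun u ⟨hu, hp, hs⟩ => hfusion u hu hp hs⟩, ?_⟩
  intro u hu hp hs
  rw [hfusion u hu hp hs]
  simp only [consShift_zero, consShift_succ, shiftFrom, fusionHead]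
  refine ⟨fun hlt => ⟨?_, fun i => ?_⟩, fun hgt => ⟨?_, fun i => ?_⟩⟩ <;> split_ifs <;> omega
end

section
/- For an occurrence-based support calculation via pattern fusion, if i is an occurrence of o (of length m) at position i and i+1 is an occurrence of f (of length m) where suffixorder(o) = prefixorder(f) and o_1 = f_m, then exactly one of the following holds: k_{i-m+1} < k_{i+1} and i+1 is an occurrence of u, or k_{i-m+1} > k_{i+1} and i+1 is an occurrence of v, where u and v are the two superpatterns of Case 1. -/
lemma rank_le_iff {α : Type*} [LinearOrder α] {ℓ : ℕ} (q : Fin ℓ → α) (a b : Fin ℓ) :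
    rankMap q a ≤ rankMap q b ↔ q a ≤ q b := by
  simp only [rankMap]
  constructor
  · intro h
    by_contra hq
    push_neg at hq
    have hs : (Finset.univ.filter fun i => q i ≤ q b) ⊂ (Finset.univ.filter fun i => q i ≤ q a) := by
      constructor
      · intro x hx
        simp only [Finset.mem_filter] at *
        exact ⟨hx.1, hx.2.trans hq.le⟩
      · intro hsub
        have := hsub (Finset.mem_filter.mpr ⟨Finset.mem_univ a, le_refl _⟩)
        simp only [Finset.mem_filter] at this
        exact absurd this.2 (not_le.mpr hq)
    exact absurd h (not_le.mpr (Finset.card_lt_card hs))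
  · intro h
    exact Finset.card_le_card (fun x hx => by
      simp only [Finset.mem_filter] at *
      exact ⟨hx.1, hx.2.trans h⟩)

lemma rankMap_congr_s14 {α β : Type*} [LinearOrder α] [LinearOrder β] {ℓ : ℕ}
    (x : Fin ℓ → α) (y : Fin ℓ → β) (h : ∀ a b, x a ≤ x b ↔ y a ≤ y b) :
    rankMap x = rankMap y := by
  funext j
  simp only [rankMap]
  congr 1
  apply Finset.filter_congr
  intro i _
  simp [h i j]

lemma rankMap_opp {ℓ : ℕ} (x : Fin ℓ → ℕ) (h : IsOPP x) : rankMap x = x := by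
  obtain ⟨hinj, hbd⟩ := h
  have himg : Finset.univ.image x = Finset.Icc 1 ℓ := by
    apply Finset.eq_of_subset_of_card_le
    · intro y hy
      simp only [Finset.mem_image] at hy
      obtain ⟨i, _, rfl⟩ := hy
      exact Finset.mem_Icc.mpr (hbd i)
    · rw [Finset.card_image_of_injective _ hinj]
      simp [Nat.card_Icc]
  funext j
  simp only [rankMap]
  have h1 : (Finset.univ.filter fun i => x i ≤ x j).card
      = ((Finset.univ.filter fun i => x i ≤ x j).image x).card :=
    (Finset.card_image_of_injective _ hinj).symm
  rw [h1]
  have h2 : (Finset.univ.filter fun i => x i ≤ x j).image x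
      = (Finset.univ.image x).filter fun y => y ≤ x j := by
    ext y
    simp only [Finset.mem_image, Finset.mem_filter, Finset.mem_univ, true_and]
    constructor
    · rintro ⟨i, hi, rfl⟩; exact ⟨⟨i, rfl⟩, hi⟩
    · rintro ⟨⟨i, rfl⟩, hi⟩; exact ⟨i, hi, rfl⟩
  rw [h2, himg]
  have h3 : (Finset.Icc 1 ℓ).filter (fun y => y ≤ x j) = Finset.Icc 1 (x j) := by
    ext y
    simp only [Finset.mem_filter, Finset.mem_Icc]
    have := hbd j
    omega
  rw [h3, Nat.card_Icc]
  have := hbd j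
  omega

lemma rank_eq_of_fusion {m : ℕ} {α β : Type*} [LinearOrder α] [LinearOrder β]
    (x : Fin (m+2) → α) (y : Fin (m+2) → β)
    (hx : Function.Injective x) (hy : Function.Injective y)
    (hp : prefixorder x = prefixorder y) (hs : suffixorder x = suffixorder y)
    (he : x 0 < x (Fin.last (m+1)) ↔ y 0 < y (Fin.last (m+1))) :
    rankMap x = rankMap y := by
  have hpre : ∀ a b : Fin (m+1), x a.castSucc ≤ x b.castSucc ↔ y a.castSucc ≤ y b.castSucc := by
    intro a b
    rw [← rank_le_iff (fun j : Fin (m+1) => x j.castSucc) a b,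
        ← rank_le_iff (fun j : Fin (m+1) => y j.castSucc) a b]
    exact iff_of_eq (by rw [show rankMap (fun j : Fin (m+1) => x j.castSucc) = rankMap (fun j : Fin (m+1) => y j.castSucc) from hp])
  have hsuf : ∀ a b : Fin (m+1), x a.succ ≤ x b.succ ↔ y a.succ ≤ y b.succ := by
    intro a b
    rw [← rank_le_iff (fun j : Fin (m+1) => x j.succ) a b,
        ← rank_le_iff (fun j : Fin (m+1) => y j.succ) a b]
    exact iff_of_eq (by rw [show rankMap (fun j : Fin (m+1) => x j.succ) = rankMap (fun j : Fin (m+1) => y j.succ) from hs])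
  apply rankMap_congr_s14
  intro a b
  by_cases hal : a = Fin.last (m+1)
  · by_cases hb0 : b = 0
    · subst hal; subst hb0
      rw [← not_lt, ← not_lt]
      exact not_congr he
    · have ha0 : a ≠ 0 := by subst hal; simp [Fin.ext_iff]
      rw [← Fin.succ_pred a ha0, ← Fin.succ_pred b hb0]
      exact hsuf _ _
  · by_cases hbl : b = Fin.last (m+1)
    · by_cases ha0 : a = 0
      · subst ha0; subst hbl
        have hne : (0 : Fin (m+2)) ≠ Fin.last (m+1) := by simp [Fin.ext_iff]
        rw [(hx.ne hne).le_iff_lt, (hy.ne hne).le_iff_lt]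
        exact he
      · have hb0 : b ≠ 0 := by subst hbl; simp [Fin.ext_iff]
        rw [← Fin.succ_pred a ha0, ← Fin.succ_pred b hb0]
        exact hsuf _ _
    · rw [← Fin.castSucc_castPred a hal, ← Fin.castSucc_castPred b hbl]
      exact hpre _ _

theorem stmt14 {m : ℕ} (k : ℕ → ℝ) (n : ℕ) (hk : Set.InjOn k (Set.Icc 1 n))
    (o f : Fin (m+1) → ℕ) (ho : IsOPP o) (hf : IsOPP f)
    (hof : suffixorder o = prefixorder f) (heq : o 0 = f (Fin.last m))
    (u v : Fin (m+2) → ℕ)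
    (hu : IsOPP u ∧ prefixorder u = o ∧ suffixorder u = f ∧ u 0 < u (Fin.last (m+1)))
    (hv : IsOPP v ∧ prefixorder v = o ∧ suffixorder v = f ∧ v (Fin.last (m+1)) < v 0)
    (i : ℕ) (hoi : isOcc k n o i) (hfi : isOcc k n f (i+1)) :
    Xor' (window k i (m+1) 0 < k (i+1) ∧ isOcc k n u (i+1))
         (k (i+1) < window k i (m+1) 0 ∧ isOcc k n v (i+1)) := by
  obtain ⟨hmi, hin, hro⟩ := hoi
  obtain ⟨hmi1, hin1, hrf⟩ := hfi
  set w : Fin (m+2) → ℝ := window k (i+1) (m+2) with hw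
  have hwj : ∀ j : Fin (m+2), w j = k (i - m + (j : ℕ)) := by
    intro j
    simp only [hw, window]
    congr 1
    omega
  have hw0 : window k i (m+1) 0 = w 0 := by
    rw [hwj]
    simp only [window, Fin.val_zero]
    congr 1
    omega
  have hwlast : w (Fin.last (m+1)) = k (i+1) := by
    rw [hwj]
    congr 1
    simp only [Fin.val_last]
    omega
  have hwin : Function.Injective w := by
    intro a b hab
    have ha := a.isLt
    have hb := b.isLt
    rw [hwj, hwj] at hab
    have := hk (Set.mem_Icc.mpr ⟨by omega, by omega⟩) (Set.mem_Icc.mpr ⟨by omega, by omega⟩) hab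
    exact Fin.ext (by omega)
  have hpw : (fun j : Fin (m+1) => w j.castSucc) = window k i (m+1) := by
    funext j
    rw [hwj]
    simp only [window, Fin.coe_castSucc]
    congr 1
    omega
  have hsw : (fun j : Fin (m+1) => w j.succ) = window k (i+1) (m+1) := by
    funext j
    rw [hwj]
    simp only [window, Fin.val_succ]
    congr 1
    omega
  have hpwo : prefixorder w = o := by
    show rankMap (fun j : Fin (m+1) => w j.castSucc) = o
    rw [hpw]; exact hro
  have hswf : suffixorder w = f := by
    show rankMap (fun j : Fin (m+1) => w j.succ) = f
    rw [hsw]; exact hrf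
  have hne : w 0 ≠ w (Fin.last (m+1)) := by
    intro h
    have := hwin h
    simp [Fin.ext_iff] at this
  rcases lt_or_gt_of_ne hne with hlt | hgt
  · left
    constructor
    · refine ⟨by rw [hw0, ← hwlast]; exact hlt, by omega, hin1, ?_⟩
      have := rank_eq_of_fusion w u hwin hu.1.1
        (by rw [hpwo, hu.2.1]) (by rw [hswf, hu.2.2.1])
        (by simp [hlt, hu.2.2.2])
      exact this.trans (rankMap_opp u hu.1)
    · rintro ⟨h, -⟩
      rw [hw0, ← hwlast] at h
      exact absurd hlt (not_lt.mpr h.le)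
  · right
    constructor
    · refine ⟨by rw [hw0, ← hwlast]; exact hgt, by omega, hin1, ?_⟩
      have := rank_eq_of_fusion w v hwin hv.1.1
        (by rw [hpwo, hv.2.1]) (by rw [hswf, hv.2.2.1])
        (by constructor
            · intro h; exact absurd h (not_lt.mpr hgt.le)
            · intro h; exact absurd h (not_lt.mpr hv.2.2.2.le))
      exact this.trans (rankMap_opp v hv.1)
    · rintro ⟨h, -⟩
      rw [hw0, ← hwlast] at h
      exact absurd hgt (not_lt.mpr h.le)
end
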